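/- arXiv:1809.08332 — 7 statements merged into one kernel-verified Lean document; each statement's English description precedes it below -/
import Mathlib

section
/- If S and T are both separable subsets of [n] with respect to a total preorder ⪰ on binary outcomes, then S ∩ T is also separable with respect to ⪰. -/
/-- Combine a partial outcome `x` on `S` with a partial outcome `u` on the complement. -/
def combine {n : ℕ} (S : Finset (Fin n)) (x u : Fin n → Bool) : Fin n → Bool :=
  fun i => if i ∈ S then x i else u i

/-- `S` is separable with respect to `r`: the ranking of partial outcomes on `S`
is independent of the fixed partial outcome on the complement. -/
def Separable {n : ℕ} (r : (Fin n → Bool) → (Fin n → Bool) → Prop)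
    (S : Finset (Fin n)) : Prop :=
  ∀ x y u v : Fin n → Bool,
    (r (combine S x u) (combine S y u) ↔ r (combine S x v) (combine S y v))

theorem separable_inter
    (n : ℕ) (r : (Fin n → Bool) → (Fin n → Bool) → Prop)
    (hrefl : ∀ x, r x x) (htrans : ∀ x y z, r x y → r y z → r x z)
    (htotal : ∀ x y, r x y ∨ r y x)
    (S T : Finset (Fin n))
    (hS : Separable r S) (hT : Separable r T) :
    Separable r (S ∩ T) := by
  intro x y u v
  -- intermediate outside outcome: u on T, v off T
  set w : Fin n → Bool := fun i => if i ∈ T then u i else v i with hw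
  have e1 : ∀ z : Fin n → Bool,
      combine (S ∩ T) z u = combine T (combine (S ∩ T) z u) u := by
    intro z; funext i
    simp only [combine, Finset.mem_inter]
    by_cases hs : i ∈ S <;> by_cases ht : i ∈ T <;> simp [hs, ht]
  have e2 : ∀ z : Fin n → Bool,
      combine T (combine (S ∩ T) z u) v = combine (S ∩ T) z w := by
    intro z; funext i
    simp only [combine, Finset.mem_inter, hw]
    by_cases hs : i ∈ S <;> by_cases ht : i ∈ T <;> simp [hs, ht]
  have e3 : ∀ z : Fin n → Bool,
      combine (S ∩ T) z w = combine S (combine (S ∩ T) z w) w := by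
    intro z; funext i
    simp only [combine, Finset.mem_inter, hw]
    by_cases hs : i ∈ S <;> by_cases ht : i ∈ T <;> simp [hs, ht]
  have e4 : ∀ z : Fin n → Bool,
      combine S (combine (S ∩ T) z w) v = combine (S ∩ T) z v := by
    intro z; funext i
    simp only [combine, Finset.mem_inter, hw]
    by_cases hs : i ∈ S <;> by_cases ht : i ∈ T <;> simp [hs, ht]
  calc r (combine (S ∩ T) x u) (combine (S ∩ T) y u)
      ↔ r (combine T (combine (S ∩ T) x u) u) (combine T (combine (S ∩ T) y u) u) := by
        rw [← e1, ← e1]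
    _ ↔ r (combine T (combine (S ∩ T) x u) v) (combine T (combine (S ∩ T) y u) v) :=
        hT _ _ u v
    _ ↔ r (combine (S ∩ T) x w) (combine (S ∩ T) y w) := by rw [e2, e2]
    _ ↔ r (combine S (combine (S ∩ T) x w) w) (combine S (combine (S ∩ T) y w) w) := by
        rw [← e3, ← e3]
    _ ↔ r (combine S (combine (S ∩ T) x w) v) (combine S (combine (S ∩ T) y w) v) :=
        hS _ _ w v
    _ ↔ r (combine (S ∩ T) x v) (combine (S ∩ T) y v) := by rw [e4, e4]
end

section
/- The collection of separable sets of any total preorder on binary outcomes is closed under arbitrary (finite) intersections and contains ∅ and [n]; hence it forms a meet-subsemilattice of the Boolean lattice containing top and bottom. -/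
theorem character_meet_subsemilattice
    (n : ℕ) (r : (Fin n → Bool) → (Fin n → Bool) → Prop)
    (hrefl : ∀ x, r x x) (htrans : ∀ x y z, r x y → r y z → r x z)
    (htotal : ∀ x y, r x y ∨ r y x) :
    Separable r (∅ : Finset (Fin n)) ∧
    Separable r (Finset.univ : Finset (Fin n)) ∧
    ∀ S T : Finset (Fin n), Separable r S → Separable r T → Separable r (S ∩ T) := by
  refine ⟨?_, ?_, ?_⟩
  · intro x y u v
    have h1 : ∀ a b : Fin n → Bool, combine (∅ : Finset (Fin n)) a b = b := by
      intro a b; funext i; simp [combine]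
    simp [h1, hrefl]
  · intro x y u v
    have h1 : ∀ a b : Fin n → Bool, combine (Finset.univ : Finset (Fin n)) a b = a := by
      intro a b; funext i; simp [combine]
    simp [h1]
  · intro S T hS hT x y u v
    have e1 : ∀ p : Fin n → Bool, combine T (combine (S ∩ T) p u) u = combine (S ∩ T) p u := by
      intro p; funext i
      by_cases hiS : i ∈ S <;> by_cases hiT : i ∈ T <;>
        simp [combine, Finset.mem_inter, hiS, hiT]
    have e2 : ∀ p : Fin n → Bool,
        combine S (combine T (combine (S ∩ T) p u) v) (combine T u v)
          = combine T (combine (S ∩ T) p u) v := by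
      intro p; funext i
      by_cases hiS : i ∈ S <;> by_cases hiT : i ∈ T <;>
        simp [combine, Finset.mem_inter, hiS, hiT]
    have e3 : ∀ p : Fin n → Bool,
        combine S (combine T (combine (S ∩ T) p u) v) v = combine (S ∩ T) p v := by
      intro p; funext i
      by_cases hiS : i ∈ S <;> by_cases hiT : i ∈ T <;>
        simp [combine, Finset.mem_inter, hiS, hiT]
    calc r (combine (S ∩ T) x u) (combine (S ∩ T) y u)
        ↔ r (combine T (combine (S ∩ T) x u) u) (combine T (combine (S ∩ T) y u) u) := by
          rw [e1, e1]
      _ ↔ r (combine T (combine (S ∩ T) x u) v) (combine T (combine (S ∩ T) y u) v) :=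
          hT _ _ u v
      _ ↔ r (combine S (combine T (combine (S ∩ T) x u) v) (combine T u v))
            (combine S (combine T (combine (S ∩ T) y u) v) (combine T u v)) := by
          rw [e2, e2]
      _ ↔ r (combine S (combine T (combine (S ∩ T) x u) v) v)
            (combine S (combine T (combine (S ∩ T) y u) v) v) :=
          hS _ _ (combine T u v) v
      _ ↔ r (combine (S ∩ T) x v) (combine (S ∩ T) y v) := by rw [e3, e3]
end

section
/- Let A, S ⊆ [n] with A ∩ S ≠ ∅ and A \ S ≠ ∅. Then S is not separable with respect to the preference order induced by the voter basis vector v_A. Concretely, taking s ∈ S ∩ A, a ∈ A \ S, x_S = ∅, y_S = {s}, u = ∅, v = {a}: v_A(x_S ∪ u) > v_A(y_S ∪ u) while v_A(x_S ∪ v) < v_A(y_S ∪ v). -/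
/-- The voter basis vector `v_A`, as a utility function on outcomes. -/
def voter {n : ℕ} (A : Finset (Fin n)) (x : Finset (Fin n)) : ℚ :=
  if Even (x ∩ A).card then 1 else 0

section Voter

variable {n : ℕ} {A : Finset (Fin n)}

@[simp]
lemma voter_empty : voter A ∅ = 1 := by
  simp [voter]

lemma voter_insert_of_mem {x : Finset (Fin n)} {a : Fin n} (ha : a ∈ A) (hx : a ∉ x) :
    voter A (insert a x) = 1 - voter A x := by
  have hcard : (insert a x ∩ A).card = (x ∩ A).card + 1 := by
    rw [Finset.insert_inter_of_mem ha, Finset.card_insert_of_notMem]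
    exact fun h => hx (Finset.mem_inter.mp h).1
  unfold voter
  simp only [hcard, Nat.even_add_one]
  split_ifs <;> norm_num

lemma voter_singleton_of_mem {s : Fin n} (hs : s ∈ A) : voter A {s} = 0 := by
  rw [← insert_empty_eq, voter_insert_of_mem hs (Finset.notMem_empty s), voter_empty, sub_self]

lemma voter_pair_of_mem {s a : Fin n} (hs : s ∈ A) (ha : a ∈ A) (hsa : s ≠ a) :
    voter A ({s} ∪ {a}) = 1 := by
  rw [Finset.union_comm, ← Finset.insert_eq,
    voter_insert_of_mem ha (Finset.notMem_singleton.mpr hsa.symm), voter_singleton_of_mem hs,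
    sub_zero]

end Voter

theorem voter_not_separable_of_straddling (n : ℕ) (A S : Finset (Fin n))
    (h1 : A ∩ S ≠ ∅) (h2 : A \ S ≠ ∅) :
    (¬ ∀ xS yS u v : Finset (Fin n), xS ⊆ S → yS ⊆ S → u ⊆ Sᶜ → v ⊆ Sᶜ →
        (voter A (xS ∪ u) ≥ voter A (yS ∪ u) ↔ voter A (xS ∪ v) ≥ voter A (yS ∪ v))) ∧
    ∀ s ∈ S ∩ A, ∀ a ∈ A \ S,
      voter A ((∅ : Finset (Fin n)) ∪ ∅) > voter A ({s} ∪ ∅) ∧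
      voter A ((∅ : Finset (Fin n)) ∪ {a}) < voter A ({s} ∪ {a}) := by
  have witness : ∀ s ∈ S ∩ A, ∀ a ∈ A \ S,
      voter A ((∅ : Finset (Fin n)) ∪ ∅) > voter A ({s} ∪ ∅) ∧
      voter A ((∅ : Finset (Fin n)) ∪ {a}) < voter A ({s} ∪ {a}) := by
    intro s hs a ha
    obtain ⟨hsS, hsA⟩ := Finset.mem_inter.mp hs
    obtain ⟨haA, haS⟩ := Finset.mem_sdiff.mp ha
    have hsa : s ≠ a := by rintro rfl; exact haS hsS
    simp only [Finset.empty_union, Finset.union_empty, voter_empty,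
      voter_singleton_of_mem hsA, voter_singleton_of_mem haA, voter_pair_of_mem hsA haA hsa]
    norm_num
  refine ⟨fun hsep => ?_, witness⟩
  obtain ⟨s, hs⟩ := Finset.nonempty_iff_ne_empty.mpr h1
  obtain ⟨a, ha⟩ := Finset.nonempty_iff_ne_empty.mpr h2
  rw [Finset.inter_comm] at hs
  obtain ⟨hu, hv⟩ := witness s hs a ha
  have hsS : {s} ⊆ S := Finset.singleton_subset_iff.mpr (Finset.mem_inter.mp hs).1
  have haS : {a} ⊆ Sᶜ := by simpa using (Finset.mem_sdiff.mp ha).2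
  have hiff := hsep ∅ {s} ∅ {a} (Finset.empty_subset S) hsS (Finset.empty_subset Sᶜ) haS
  exact absurd (hiff.mp hu.le) (not_le.mpr hv)
end

section
/- The character of the preference order induced by voter basis vector v_A equals { S ⊆ [n] : A ⊆ S or A ∩ S = ∅ }. -/
/-!
Only the parity of `|x ∩ A|` matters. If `A ⊆ S`, the part of an outcome outside `S` does not
meet `A`, so it never changes the utility; if `A ∩ S = ∅`, the part inside `S` never does, so
the comparison is always an equality. Otherwise pick `b ∈ A ∩ S` and `a ∈ A \ S`: with outside
part `∅` the outcome `∅` beats `{b}`, while with outside part `{a}` the outcome `{b, a}` beats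
`{a}`.
-/

open Finset

section Separability

variable {α β : Type*} [Fintype α] [DecidableEq α] [Preorder β]

def IsPreferenceSeparable (f : Finset α → β) (S : Finset α) : Prop :=
  ∀ xS yS u v : Finset α, xS ⊆ S → yS ⊆ S → u ⊆ Sᶜ → v ⊆ Sᶜ →
    (f (xS ∪ u) ≥ f (yS ∪ u) ↔ f (xS ∪ v) ≥ f (yS ∪ v))

theorem IsPreferenceSeparable.of_forall_union_eq_left {f : Finset α → β} {S : Finset α}
    (h : ∀ x u, u ⊆ Sᶜ → f (x ∪ u) = f x) : IsPreferenceSeparable f S := by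
  intro xS yS u v _ _ hu hv
  rw [h xS u hu, h yS u hu, h xS v hv, h yS v hv]

theorem IsPreferenceSeparable.of_forall_union_eq_right {f : Finset α → β} {S : Finset α}
    (h : ∀ x u, x ⊆ S → f (x ∪ u) = f u) : IsPreferenceSeparable f S := by
  intro xS yS u v hxS hyS _ _
  rw [h xS u hxS, h yS u hyS, h xS v hxS, h yS v hyS]
  exact iff_of_true le_rfl le_rfl

end Separability

namespace voter

variable {n : ℕ} (A : Finset (Fin n))

theorem union_of_disjoint_right {x u : Finset (Fin n)} (h : Disjoint u A) :
    voter A (x ∪ u) = voter A x := by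
  rw [voter, union_inter_distrib_right, disjoint_iff_inter_eq_empty.mp h, union_empty, voter]

theorem union_of_disjoint_left {x u : Finset (Fin n)} (h : Disjoint x A) :
    voter A (x ∪ u) = voter A u := by
  rw [union_comm, union_of_disjoint_right A h]

theorem empty : voter A ∅ = 1 := by
  simp [voter]

theorem singleton {a : Fin n} (ha : a ∈ A) : voter A {a} = 0 := by
  simp [voter, singleton_inter_of_mem ha]

theorem pair {a b : Fin n} (ha : a ∈ A) (hb : b ∈ A) (hab : a ≠ b) : voter A {a, b} = 1 := by
  rw [voter, inter_eq_left.mpr (insert_subset ha (singleton_subset_iff.mpr hb)), card_pair hab]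
  simp

end voter

theorem isPreferenceSeparable_voter_iff {n : ℕ} (A S : Finset (Fin n)) :
    IsPreferenceSeparable (voter A) S ↔ A ⊆ S ∨ A ∩ S = ∅ := by
  constructor
  · intro hsep
    by_contra! h
    obtain ⟨a, haA, haS⟩ := not_subset.mp h.1
    obtain ⟨b, hb⟩ := h.2
    obtain ⟨hbA, hbS⟩ := mem_inter.mp hb
    have hba : b ≠ a := fun e => haS (e ▸ hbS)
    have key := hsep {b} ∅ ∅ {a} (singleton_subset_iff.mpr hbS) (empty_subset S)
      (empty_subset _) (singleton_subset_iff.mpr (mem_compl.mpr haS))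
    rw [union_empty, union_empty, empty_union, ← insert_eq, voter.singleton A hbA,
      voter.empty, voter.pair A hbA haA hba, voter.singleton A haA] at key
    norm_num at key
  · rintro (hAS | hAS)
    · exact .of_forall_union_eq_left fun _ _ hu =>
        voter.union_of_disjoint_right A (disjoint_compl_left.mono hu hAS)
    · exact .of_forall_union_eq_right fun _ _ hx =>
        voter.union_of_disjoint_left A ((disjoint_iff_inter_eq_empty.mpr hAS).symm.mono_left hx)

theorem voter_character (n : ℕ) (A : Finset (Fin n)) :
    ∀ S : Finset (Fin n),
      ((∀ xS yS u v : Finset (Fin n), xS ⊆ S → yS ⊆ S → u ⊆ Sᶜ → v ⊆ Sᶜ →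
          (voter A (xS ∪ u) ≥ voter A (yS ∪ u) ↔ voter A (xS ∪ v) ≥ voter A (yS ∪ v)))
        ↔ (A ⊆ S ∨ A ∩ S = ∅)) :=
  isPreferenceSeparable_voter_iff A
end

section
/- Let ρ : Finset (Fin n) → ℕ be an injective rank function that is strictly monotone with respect to strict containment (A ⊊ B implies ρ(A) < ρ(B)) and values in {1,…,2ⁿ}. Define w(x) = Σ_{A ⊆ [n]} 2^{ρ(A)} · [|x ∩ A| even] for each outcome x ⊆ [n]. Then for any nonempty proper A ⊆ [n] with a ∈ A and b ∉ A, we have w(∅) > w({a}) but w({b}) < w({a,b}); consequently A is not separable under the order induced by w, so char(w) = {∅, [n]}. -/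
/-!
Each subset `A` contributes `2^{ρ(A)}` to `w(x)` exactly when `x` meets `A` evenly. Removing `a`
from `∅` only loses the terms with `a ∈ A`, so `w({a}) < w(∅)`. Pairing every `A ∌ b` with
`insert b A`, adding `a` to `{b}` trades the weight of each `A ∋ a` for that of `insert b A`, which
is larger since `ρ` is strictly monotone; so `w({b}) < w({a, b})`. Adding `a` thus lowers `w` on one
side of any cut separating `a` from `b` and raises it on the other, which rules out separability.
-/

/-- The nonseparable utility `w(x) = Σ_A 2^{ρ(A)} [|x ∩ A| even]`. -/
def wvec {n : ℕ} (ρ : Finset (Fin n) → ℕ) (x : Finset (Fin n)) : ℚ :=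
  ∑ A : Finset (Fin n), (2 : ℚ) ^ (ρ A) * (if Even (x ∩ A).card then 1 else 0)

open Finset

/-- Separability of `S` for the preference `x ⪰ y ↔ w y ≤ w x`. -/
def IsPrefSeparable {α β : Type*} [Fintype α] [DecidableEq α] [LE β] (w : Finset α → β)
    (S : Finset α) : Prop :=
  ∀ xS yS u v : Finset α, xS ⊆ S → yS ⊆ S → u ⊆ Sᶜ → v ⊆ Sᶜ →
    (w (xS ∪ u) ≥ w (yS ∪ u) ↔ w (xS ∪ v) ≥ w (yS ∪ v))

section Separability

variable {α β : Type*} [Fintype α] [DecidableEq α]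

theorem isPrefSeparable_empty [Preorder β] (w : Finset α → β) : IsPrefSeparable w ∅ := by
  intro xS yS u v hx hy _ _
  rw [subset_empty.1 hx, subset_empty.1 hy]
  exact iff_of_true le_rfl le_rfl

theorem isPrefSeparable_univ [LE β] (w : Finset α → β) : IsPrefSeparable w univ := by
  intro xS yS u v _ _ hu hv
  rw [compl_univ, subset_empty] at hu hv
  rw [hu, hv]

theorem not_isPrefSeparable_of_lt [Preorder β] {w : Finset α → β} {S : Finset α} {a b : α}
    (ha : a ∈ S) (hb : b ∉ S) (hdec : w {a} ≤ w ∅) (hinc : w {b} < w {a, b}) :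
    ¬ IsPrefSeparable w S := by
  intro hsep
  have key := hsep ∅ {a} ∅ {b} (empty_subset _) (singleton_subset_iff.2 ha) (empty_subset _)
    (singleton_subset_iff.2 (mem_compl.2 hb))
  simp only [union_empty, empty_union] at key
  exact (key.1 hdec).not_gt hinc

end Separability

theorem Finset.sum_finset_eq_sum_powerset_erase {α M : Type*} [Fintype α] [DecidableEq α]
    [AddCommMonoid M] (b : α) (f : Finset α → M) :
    ∑ A : Finset α, f A = ∑ A ∈ (univ.erase b).powerset, (f A + f (insert b A)) := by
  rw [sum_add_distrib, ← sum_powerset_insert (notMem_erase b univ), insert_erase (mem_univ b),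
    powerset_univ]

section Wvec

variable {n : ℕ} (ρ : Finset (Fin n) → ℕ)

theorem wvec_singleton_lt_wvec_empty (a : Fin n) : wvec ρ {a} < wvec ρ ∅ := by
  refine sum_lt_sum (fun A _ => ?_) ⟨{a}, mem_univ _, ?_⟩
  · simp only [empty_inter, card_empty, Even.zero, if_true]
    split_ifs <;> simp
  · simp

theorem wvec_singleton_lt_wvec_pair (hmono : ∀ A B : Finset (Fin n), A ⊂ B → ρ A < ρ B)
    {a b : Fin n} (hab : a ≠ b) : wvec ρ {b} < wvec ρ {a, b} := by
  rw [wvec, wvec, sum_finset_eq_sum_powerset_erase b, sum_finset_eq_sum_powerset_erase b]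
  refine sum_lt_sum (fun A hA => ?_) ⟨{a}, ?_, ?_⟩
  · have hbA : b ∉ A := fun h => notMem_erase b univ (mem_powerset.1 hA h)
    by_cases haA : a ∈ A
    · have hlt : (2 : ℚ) ^ ρ A < 2 ^ ρ (insert b A) :=
        pow_lt_pow_right₀ one_lt_two (hmono _ _ (ssubset_insert hbA))
      simp [hbA, haA, card_pair hab.symm, insert_inter_of_mem, hlt.le]
    · simp [hbA, haA, insert_inter_of_notMem]
  · simpa using hab
  · have hlt : (2 : ℚ) ^ ρ {a} < 2 ^ ρ {b, a} :=
      pow_lt_pow_right₀ one_lt_two (hmono _ _ (ssubset_insert (by simpa using hab.symm)))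
    simpa [hab, hab.symm, pair_comm a b] using hlt

theorem not_isPrefSeparable_wvec (hmono : ∀ A B : Finset (Fin n), A ⊂ B → ρ A < ρ B)
    {S : Finset (Fin n)} (hS₀ : S ≠ ∅) (hSu : S ≠ univ) : ¬ IsPrefSeparable (wvec ρ) S := by
  obtain ⟨a, ha⟩ := nonempty_iff_ne_empty.2 hS₀
  obtain ⟨b, hb⟩ := not_forall.1 (mt eq_univ_of_forall hSu)
  exact not_isPrefSeparable_of_lt ha hb (wvec_singleton_lt_wvec_empty ρ a).le
    (wvec_singleton_lt_wvec_pair ρ hmono (ne_of_mem_of_not_mem ha hb))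

theorem setOf_isPrefSeparable_wvec (hmono : ∀ A B : Finset (Fin n), A ⊂ B → ρ A < ρ B) :
    {S | IsPrefSeparable (wvec ρ) S} = {∅, univ} := by
  ext S
  refine ⟨fun hsep => ?_, ?_⟩
  · by_contra h
    exact not_isPrefSeparable_wvec ρ hmono (not_or.1 h).1 (not_or.1 h).2 hsep
  · rintro (rfl | rfl)
    exacts [isPrefSeparable_empty _, isPrefSeparable_univ _]

end Wvec

theorem completely_nonseparable_general (n : ℕ) (ρ : Finset (Fin n) → ℕ)
    (hmono : ∀ A B : Finset (Fin n), A ⊂ B → ρ A < ρ B) :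
    (∀ A : Finset (Fin n), A ≠ ∅ → A ≠ Finset.univ →
      ∀ a ∈ A, ∀ b ∉ A,
        wvec ρ (∅ : Finset (Fin n)) > wvec ρ {a} ∧ wvec ρ {b} < wvec ρ ({a, b})) ∧
    (∀ A : Finset (Fin n), A ≠ ∅ → A ≠ Finset.univ →
      ¬ ∀ xS yS u v : Finset (Fin n), xS ⊆ A → yS ⊆ A → u ⊆ Aᶜ → v ⊆ Aᶜ →
          (wvec ρ (xS ∪ u) ≥ wvec ρ (yS ∪ u) ↔ wvec ρ (xS ∪ v) ≥ wvec ρ (yS ∪ v))) ∧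
    {S : Finset (Fin n) |
        ∀ xS yS u v : Finset (Fin n), xS ⊆ S → yS ⊆ S → u ⊆ Sᶜ → v ⊆ Sᶜ →
          (wvec ρ (xS ∪ u) ≥ wvec ρ (yS ∪ u) ↔ wvec ρ (xS ∪ v) ≥ wvec ρ (yS ∪ v))}
      = {∅, Finset.univ} :=
  ⟨fun _ _ _ a ha _ hb => ⟨wvec_singleton_lt_wvec_empty ρ a,
      wvec_singleton_lt_wvec_pair ρ hmono (ne_of_mem_of_not_mem ha hb)⟩,
    fun _ hA₀ hAu => not_isPrefSeparable_wvec ρ hmono hA₀ hAu,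
    setOf_isPrefSeparable_wvec ρ hmono⟩

theorem completely_nonseparable (n : ℕ) (ρ : Finset (Fin n) → ℕ)
    (hinj : Function.Injective ρ)
    (hmono : ∀ A B : Finset (Fin n), A ⊂ B → ρ A < ρ B)
    (hrange : ∀ A : Finset (Fin n), 1 ≤ ρ A ∧ ρ A ≤ 2 ^ n) :
    (∀ A : Finset (Fin n), A ≠ ∅ → A ≠ Finset.univ →
      ∀ a ∈ A, ∀ b ∉ A,
        wvec ρ (∅ : Finset (Fin n)) > wvec ρ {a} ∧ wvec ρ {b} < wvec ρ ({a, b})) ∧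
    (∀ A : Finset (Fin n), A ≠ ∅ → A ≠ Finset.univ →
      ¬ ∀ xS yS u v : Finset (Fin n), xS ⊆ A → yS ⊆ A → u ⊆ Aᶜ → v ⊆ Aᶜ →
          (wvec ρ (xS ∪ u) ≥ wvec ρ (yS ∪ u) ↔ wvec ρ (xS ∪ v) ≥ wvec ρ (yS ∪ v))) ∧
    {S : Finset (Fin n) |
        ∀ xS yS u v : Finset (Fin n), xS ⊆ S → yS ⊆ S → u ⊆ Sᶜ → v ⊆ Sᶜ →
          (wvec ρ (xS ∪ u) ≥ wvec ρ (yS ∪ u) ↔ wvec ρ (xS ∪ v) ≥ wvec ρ (yS ∪ v))}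
      = {∅, Finset.univ} :=
  completely_nonseparable_general n ρ hmono
end

section
/- With w(x) = Σ_{A ⊆ [n]} 2^{ρ(A)} [|x ∩ A| even] for an injective ρ : Finset (Fin n) → {1,…,2ⁿ}: if x ≠ y are distinct outcomes, then w(x) ≠ w(y). Hence w induces a strict total order on the 2ⁿ outcomes. -/
theorem wvec_injective (n : ℕ) (ρ : Finset (Fin n) → ℕ)
    (hinj : Function.Injective ρ)
    (hrange : ∀ A : Finset (Fin n), 1 ≤ ρ A ∧ ρ A ≤ 2 ^ n) :
    ∀ x y : Finset (Fin n), x ≠ y → wvec ρ x ≠ wvec ρ y := by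
  have key : ∀ x : Finset (Fin n), wvec ρ x =
      ((∑ i ∈ (Finset.univ.filter (fun A : Finset (Fin n) => Even (x ∩ A).card)).image ρ,
        2 ^ i : ℕ) : ℚ) := by
    intro x
    rw [Finset.sum_image (fun a _ b _ h => hinj h)]
    push_cast
    simp [wvec, Finset.sum_filter, mul_ite]
  intro x y hxy h
  rw [key x, key y, Nat.cast_inj] at h
  have himg := Finset.geomSum_injective (le_refl 2) h
  have hfil : (Finset.univ.filter (fun A : Finset (Fin n) => Even (x ∩ A).card)) =
      (Finset.univ.filter (fun A : Finset (Fin n) => Even (y ∩ A).card)) := by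
    ext A
    constructor
    · intro hA
      have : ρ A ∈ (Finset.univ.filter (fun A : Finset (Fin n) => Even (y ∩ A).card)).image ρ := by
        rw [← himg]; exact Finset.mem_image_of_mem ρ hA
      obtain ⟨B, hB, hBA⟩ := Finset.mem_image.1 this
      rwa [hinj hBA] at hB
    · intro hA
      have : ρ A ∈ (Finset.univ.filter (fun A : Finset (Fin n) => Even (x ∩ A).card)).image ρ := by
        rw [himg]; exact Finset.mem_image_of_mem ρ hA
      obtain ⟨B, hB, hBA⟩ := Finset.mem_image.1 this
      rwa [hinj hBA] at hB
  have hsame : ∀ A : Finset (Fin n), Even (x ∩ A).card ↔ Even (y ∩ A).card := by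
    intro A
    have := Finset.ext_iff.1 hfil A
    simpa using this
  apply hxy
  ext a
  have := hsame {a}
  by_cases hax : a ∈ x <;> by_cases hay : a ∈ y <;>
    simp_all [Finset.inter_comm, Finset.singleton_inter_of_mem, Finset.singleton_inter_of_notMem,
      Nat.even_iff]
end

section
/- Let n ≥ 3, α = 2 - 2^{-(n-1)}, and 1 ≤ m ≤ n-1. Then 0 < α^m - Σ_{i=0}^{m-1} α^i < 1. Consequently, for 1 ≤ r < s ≤ n-1: Σ_{i=r}^{s-1} α^i < α^s < α^r + Σ_{i=r}^{s-1} α^i. -/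
theorem alpha_powers (n : ℕ) (hn : 3 ≤ n) (α : ℚ)
    (hα : α = 2 - (1 / 2) ^ (n - 1)) :
    (∀ m : ℕ, 1 ≤ m → m ≤ n - 1 →
      0 < α ^ m - ∑ i ∈ Finset.range m, α ^ i ∧
      α ^ m - ∑ i ∈ Finset.range m, α ^ i < 1) ∧
    (∀ r s : ℕ, 1 ≤ r → r < s → s ≤ n - 1 →
      (∑ i ∈ Finset.Ico r s, α ^ i) < α ^ s ∧
      α ^ s < α ^ r + ∑ i ∈ Finset.Ico r s, α ^ i) := by
  set ε : ℚ := (1/2)^(n-1) with hεdef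
  have hn2 : 2 ≤ n - 1 := by omega
  have hε0 : 0 < ε := by positivity
  have hε4 : ε ≤ 1/4 := by
    calc ε ≤ (1/2:ℚ)^2 := pow_le_pow_of_le_one (by norm_num) (by norm_num) hn2
    _ = 1/4 := by norm_num
  have hα1 : 1 < α := by rw [hα]; linarith
  have hα2 : α < 2 := by rw [hα]; linarith
  have key : ∀ m : ℕ, 1 ≤ m → m ≤ n - 1 →
      0 < α ^ m - ∑ i ∈ Finset.range m, α ^ i ∧
      α ^ m - ∑ i ∈ Finset.range m, α ^ i < 1 := by
    intro m hm1 hm2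
    have hA1 : 1 < α ^ m := one_lt_pow₀ hα1 (by omega)
    have hAε : α ^ m * ε < 1 := by
      have h1 : α ^ m < 2 ^ m := pow_lt_pow_left₀ hα2 (by linarith) (by omega)
      have h2 : (2:ℚ)^m ≤ 2^(n-1) := pow_le_pow_right₀ (by norm_num) hm2
      have h3 : (2:ℚ)^(n-1) * ε = 1 := by
        rw [hεdef, ← mul_pow]; norm_num
      nlinarith
    have hsum : ∑ i ∈ Finset.range m, α ^ i = (α ^ m - 1)/(α - 1) :=
      geom_sum_eq (by linarith) m
    have hαe : α = 2 - ε := hα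
    rw [hsum]
    constructor
    · rw [sub_pos, div_lt_iff₀ (by linarith)]
      nlinarith
    · rw [sub_lt_iff_lt_add, ← sub_lt_iff_lt_add', lt_div_iff₀ (by linarith : (0:ℚ) < α - 1)]
      nlinarith
  refine ⟨key, ?_⟩
  intro r s hr hrs hs
  obtain ⟨h1, h2⟩ := key (s - r) (by omega) (by omega)
  have hsplit : ∑ i ∈ Finset.Ico r s, α ^ i
      = α ^ r * ∑ i ∈ Finset.range (s-r), α ^ i := by
    rw [Finset.sum_Ico_eq_sum_range, Finset.mul_sum]
    exact Finset.sum_congr rfl fun i _ => by rw [pow_add]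
  have hpow : α ^ s = α ^ r * α ^ (s-r) := by rw [← pow_add]; congr 1; omega
  have hαr : 0 < α ^ r := by positivity
  constructor <;> nlinarith
end
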